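/- Let (P, ♭, L, O) be an outer-presheaf structure and let k be a hyper-element of ♭*O. Define h^∧ by h^∧_V := ⨆ { δ(k_W)_V | W ∈ P, V ≤ ♭W } (the supremum in L of this possibly empty set, which lies in O(V) by sup-closedness). Then h^∧ is a hyper-element of O, it is a translation of k (i.e., h^∧_{♭V} = k_V for all V), and it is the smallest translation: every hyper-element h' of O with h'_{♭V} = k_V for all V satisfies h^∧_V ≤ h'_V for all V ∈ P. -/

import Mathlib

/-!
`h^∧` is antitone in `V`, since shrinking `V` enlarges both the index set and each term
`δ(k_W)_V`; as `h^∧_{V'}` lies in `O(V')`, this makes `h^∧` a hyper-element. Minimality is immediate: a translation `h'` has `h'_{♭W} = k_W`, so its hyper-element condition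
puts every term `δ(k_W)_V` with `V ≤ ♭W` below `h'_V`. For the translation property at `♭V`, the
condition on `k` applied to `♭V ≤ W` bounds each term by `k_{♭V} = k_V`, while the term `W = V` is
`δ(k_V)_{♭V} = k_V` because `k_V ∈ O(♭V)`.
-/

universe u v

/-- The daseinization of `x ∈ L` at `V ∈ P`: the infimum of the elements of `O V` above `x`. -/
def dasein {P : Type u} {L : Type v} [CompleteLattice L]
    (O : P → Set L) (x : L) (V : P) : L :=
  sInf {y | y ∈ O V ∧ x ≤ y}

section

variable {P : Type u} {L : Type v} [CompleteLattice L] {O : P → Set L}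

theorem le_dasein (x : L) (V : P) : x ≤ dasein O x V :=
  le_sInf fun _ hy => hy.2

theorem dasein_le {x y : L} {V : P} (hy : y ∈ O V) (hxy : x ≤ y) : dasein O x V ≤ y :=
  sInf_le ⟨hy, hxy⟩

theorem dasein_eq_of_mem {x : L} {V : P} (hx : x ∈ O V) : dasein O x V = x :=
  le_antisymm (dasein_le hx le_rfl) (le_dasein x V)

theorem dasein_mem {V : P} (hInf : ∀ T : Set L, T ⊆ O V → sInf T ∈ O V) (x : L) :
    dasein O x V ∈ O V :=
  hInf _ fun _ hy => hy.1

variable [Preorder P]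

theorem dasein_anti (hOmono : ∀ ⦃V' V : P⦄, V' ≤ V → O V' ⊆ O V) (x : L) {V' V : P}
    (h : V' ≤ V) : dasein O x V ≤ dasein O x V' :=
  sInf_le_sInf fun _ hy => ⟨hOmono h hy.1, hy.2⟩

def minTranslation (b : P → P) (O : P → Set L) (k : P → L) (V : P) : L :=
  sSup {z | ∃ W, V ≤ b W ∧ z = dasein O (k W) V}

variable (b : P → P) (k : P → L)

theorem minTranslation_mem {V : P} (hInf : ∀ T : Set L, T ⊆ O V → sInf T ∈ O V)
    (hSup : ∀ T : Set L, T ⊆ O V → sSup T ∈ O V) : minTranslation b O k V ∈ O V :=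
  hSup _ <| by
    rintro _ ⟨W, -, rfl⟩
    exact dasein_mem hInf _

theorem minTranslation_anti (hOmono : ∀ ⦃V' V : P⦄, V' ≤ V → O V' ⊆ O V) {V' V : P}
    (h : V' ≤ V) : minTranslation b O k V ≤ minTranslation b O k V' :=
  sSup_le_sSup_of_isCofinalFor <| by
    rintro _ ⟨W, hVW, rfl⟩
    exact ⟨_, ⟨W, h.trans hVW, rfl⟩, dasein_anti hOmono _ h⟩

theorem dasein_minTranslation_le (hOmono : ∀ ⦃V' V : P⦄, V' ≤ V → O V' ⊆ O V) {V' V : P}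
    (hInf : ∀ T : Set L, T ⊆ O V' → sInf T ∈ O V') (hSup : ∀ T : Set L, T ⊆ O V' → sSup T ∈ O V')
    (h : V' ≤ V) : dasein O (minTranslation b O k V) V' ≤ minTranslation b O k V' :=
  dasein_le (minTranslation_mem b k hInf hSup) (minTranslation_anti b k hOmono h)

theorem minTranslation_isTranslation (hdefl : ∀ V : P, b V ≤ V) (hidem : ∀ V : P, b (b V) = b V)
    (hk1 : ∀ V : P, k V ∈ O (b V)) (hk2 : ∀ V : P, k (b V) = k V)
    (hk3 : ∀ ⦃V' V : P⦄, V' ≤ V → dasein O (k V) (b V') ≤ k V') (V : P) :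
    minTranslation b O k (b V) = k V := by
  apply le_antisymm
  · refine sSup_le ?_
    rintro _ ⟨W, hVW, rfl⟩
    simpa only [hidem, hk2] using hk3 (hVW.trans (hdefl W))
  · exact le_sSup ⟨V, le_rfl, (dasein_eq_of_mem (hk1 V)).symm⟩

theorem minTranslation_le {h : P → L}
    (hh : ∀ ⦃V' V : P⦄, V' ≤ V → dasein O (h V) V' ≤ h V') (hhk : ∀ V : P, h (b V) = k V)
    (V : P) : minTranslation b O k V ≤ h V := by
  refine sSup_le ?_
  rintro _ ⟨W, hVW, rfl⟩
  exact hhk W ▸ hh hVW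

end

theorem min_translation_of_proposition_general
    {P : Type u} [Preorder P] (b : P → P)
    (hdefl : ∀ V : P, b V ≤ V)
    (hidem : ∀ V : P, b (b V) = b V)
    {L : Type v} [CompleteLattice L] (O : P → Set L)
    (hOmono : ∀ ⦃V' V : P⦄, V' ≤ V → O V' ⊆ O V)
    (hInf : ∀ (V : P) (T : Set L), T ⊆ O V → sInf T ∈ O V)
    (hSup : ∀ (V : P) (T : Set L), T ⊆ O V → sSup T ∈ O V)
    (k : P → L)
    (hk1 : ∀ V : P, k V ∈ O (b V))
    (hk2 : ∀ V : P, k (b V) = k V)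
    (hk3 : ∀ ⦃V' V : P⦄, V' ≤ V → dasein O (k V) (b V') ≤ k V') :
    ((∀ V : P, sSup {z : L | ∃ W : P, V ≤ b W ∧ z = dasein O (k W) V} ∈ O V) ∧
      (∀ ⦃V' V : P⦄, V' ≤ V →
        dasein O (sSup {z : L | ∃ W : P, V ≤ b W ∧ z = dasein O (k W) V}) V' ≤
          sSup {z : L | ∃ W : P, V' ≤ b W ∧ z = dasein O (k W) V'})) ∧
    (∀ V : P, sSup {z : L | ∃ W : P, b V ≤ b W ∧ z = dasein O (k W) (b V)} = k V) ∧
    (∀ h' : P → L, (∀ V : P, h' V ∈ O V) →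
      (∀ ⦃V' V : P⦄, V' ≤ V → dasein O (h' V) V' ≤ h' V') →
      (∀ V : P, h' (b V) = k V) →
      ∀ V : P, sSup {z : L | ∃ W : P, V ≤ b W ∧ z = dasein O (k W) V} ≤ h' V) :=
  ⟨⟨fun V => minTranslation_mem b k (hInf V) (hSup V),
      fun V' _ => dasein_minTranslation_le b k hOmono (hInf V') (hSup V')⟩,
    minTranslation_isTranslation b k hdefl hidem hk1 hk2 hk3,
    fun _ _ hh hhk => minTranslation_le b k hh hhk⟩

/-- for a hyper-element `k` of `♭*O`, the family
`h^∧_V := ⨆ { δ(k_W)_V | W ∈ P, V ≤ ♭W }` is a hyper-element of `O`, a translation of `k`,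
and the smallest translation of `k`. -/
theorem min_translation_of_proposition
    {P : Type u} [Preorder P] (b : P → P)
    (hmono : ∀ ⦃V' V : P⦄, V' ≤ V → b V' ≤ b V)
    (hdefl : ∀ V : P, b V ≤ V)
    (hidem : ∀ V : P, b (b V) = b V)
    {L : Type v} [CompleteLattice L] (O : P → Set L)
    (hOmono : ∀ ⦃V' V : P⦄, V' ≤ V → O V' ⊆ O V)
    (hInf : ∀ (V : P) (T : Set L), T ⊆ O V → sInf T ∈ O V)
    (hSup : ∀ (V : P) (T : Set L), T ⊆ O V → sSup T ∈ O V)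
    (k : P → L)
    (hk1 : ∀ V : P, k V ∈ O (b V))
    (hk2 : ∀ V : P, k (b V) = k V)
    (hk3 : ∀ ⦃V' V : P⦄, V' ≤ V → dasein O (k V) (b V') ≤ k V') :
    ((∀ V : P, sSup {z : L | ∃ W : P, V ≤ b W ∧ z = dasein O (k W) V} ∈ O V) ∧
      (∀ ⦃V' V : P⦄, V' ≤ V →
        dasein O (sSup {z : L | ∃ W : P, V ≤ b W ∧ z = dasein O (k W) V}) V' ≤
          sSup {z : L | ∃ W : P, V' ≤ b W ∧ z = dasein O (k W) V'})) ∧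
    (∀ V : P, sSup {z : L | ∃ W : P, b V ≤ b W ∧ z = dasein O (k W) (b V)} = k V) ∧
    (∀ h' : P → L, (∀ V : P, h' V ∈ O V) →
      (∀ ⦃V' V : P⦄, V' ≤ V → dasein O (h' V) V' ≤ h' V') →
      (∀ V : P, h' (b V) = k V) →
      ∀ V : P, sSup {z : L | ∃ W : P, V ≤ b W ∧ z = dasein O (k W) V} ≤ h' V) :=
  min_translation_of_proposition_general b hdefl hidem O hOmono hInf hSup k hk1 hk2 hk3
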